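/- arXiv:1802.09071 — 3 statements merged into one kernel-verified Lean document; each statement's English description precedes it below -/
import Mathlib

section
/- Suppose for the system ẋ = f(x, w) with output z = h(x) there exists P ∈ 𝕊ⁿ₊₊ and scalars μ₀, μ₁, μ₂ > 0 such that (i) V̇(x) < 0 whenever xᵀPx > μ₀‖w‖₂², and (ii) ‖z‖₂² ≤ μ₁xᵀPx + μ₂‖w‖₂² for all x, w, where V(x) = xᵀPx. Then for zero initial condition x(0) = 0 and any bounded disturbance w ∈ L∞, the output satisfies ‖z(t)‖₂ ≤ μ‖w‖_{L∞} for all t ≥ 0, with μ = √(μ₀μ₁ + μ₂). -/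
/-!
Along the trajectory, `V(t) = x(t)ᵀ P x(t)` starts at `0` and, by (i), decreases whenever it
exceeds `μ₀ ‖w‖²_{L∞} ≥ μ₀ ‖w(t)‖²`; hence it never exceeds `μ₀ ‖w‖²_{L∞}`. Plugging this bound
into (ii) gives `‖z(t)‖² ≤ (μ₀ μ₁ + μ₂) ‖w‖²_{L∞}`.
-/

open Matrix Set

section Derivatives

variable {𝕜 ι κ : Type*} [NontriviallyNormedField 𝕜] [Fintype ι] {t : 𝕜}

theorem HasDerivAt.dotProduct {u v : 𝕜 → ι → 𝕜} {u' v' : ι → 𝕜}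
    (hu : HasDerivAt u u' t) (hv : HasDerivAt v v' t) :
    HasDerivAt (fun s => u s ⬝ᵥ v s) (u' ⬝ᵥ v t + u t ⬝ᵥ v') t := by
  have h := HasDerivAt.fun_sum fun i (_ : i ∈ Finset.univ) =>
    (hasDerivAt_pi.1 hu i).fun_mul (hasDerivAt_pi.1 hv i)
  simpa only [_root_.dotProduct, Finset.sum_add_distrib] using h

theorem HasDerivAt.mulVec (M : Matrix κ ι 𝕜) {v : 𝕜 → ι → 𝕜} {v' : ι → 𝕜}
    (hv : HasDerivAt v v' t) :
    HasDerivAt (fun s => M *ᵥ v s) (M *ᵥ v') t :=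
  hasDerivAt_pi.2 fun i =>
    HasDerivAt.fun_sum fun j (_ : j ∈ Finset.univ) => (hasDerivAt_pi.1 hv j).const_mul (M i j)

end Derivatives

theorem image_le_of_deriv_right_neg_of_lt {f f' : ℝ → ℝ} {a b c : ℝ}
    (hf : ContinuousOn f (Icc a b)) (hf' : ∀ x ∈ Ico a b, HasDerivWithinAt f (f' x) (Ici x) x)
    (ha : f a ≤ c) (hneg : ∀ x ∈ Ico a b, c < f x → f' x < 0) :
    ∀ ⦃x⦄, x ∈ Icc a b → f x ≤ c := by
  intro x hx
  -- The fencing theorem needs strict decrease on the barrier itself, so raise it by `ε`.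
  refine le_of_forall_pos_le_add fun ε hε => ?_
  exact image_le_of_deriv_right_lt_deriv_boundary (B := fun _ => c + ε) (B' := fun _ => 0)
    hf hf' (by linarith) (fun _ => hasDerivAt_const _ _)
    (fun y hy hfy => hneg y hy (by linarith)) hx

theorem dotProduct_self_le_sq_iSup_sqrt {ι κ : Type*} [Fintype κ] {v : ι → κ → ℝ}
    (hv : BddAbove (range fun i => √(v i ⬝ᵥ v i))) (i : ι) :
    v i ⬝ᵥ v i ≤ (⨆ j, √(v j ⬝ᵥ v j)) ^ 2 :=
  (Real.sqrt_le_left (Real.iSup_nonneg fun _ => Real.sqrt_nonneg _)).1 (le_ciSup hv i)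

theorem linf_stability_performance_general (n m p q : ℕ)
    (A : Matrix (Fin n) (Fin n) ℝ) (Bu : Matrix (Fin n) (Fin m) ℝ)
    (K : Matrix (Fin m) (Fin n) ℝ) (Bw : Matrix (Fin n) (Fin p) ℝ)
    (C : Matrix (Fin q) (Fin n) ℝ) (D : Matrix (Fin q) (Fin m) ℝ)
    (P : Matrix (Fin n) (Fin n) ℝ)
    (μ₀ μ₁ μ₂ : ℝ) (hμ₀ : 0 < μ₀) (hμ₁ : 0 < μ₁) (hμ₂ : 0 < μ₂)
    (x : ℝ → (Fin n → ℝ)) (w : ℝ → (Fin p → ℝ))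
    (hx0 : x 0 = 0)
    (hdyn : ∀ t : ℝ, HasDerivAt x ((A + Bu * K).mulVec (x t) + Bw.mulVec (w t)) t)
    (hwbdd : BddAbove (Set.range fun t : {s : ℝ // 0 ≤ s} =>
        Real.sqrt (w t ⬝ᵥ w t)))
    (hi : ∀ (v : Fin n → ℝ) (u : Fin p → ℝ),
        v ⬝ᵥ P.mulVec v > μ₀ * (u ⬝ᵥ u) →
        ((A + Bu * K).mulVec v + Bw.mulVec u) ⬝ᵥ P.mulVec v
          + v ⬝ᵥ P.mulVec ((A + Bu * K).mulVec v + Bw.mulVec u) < 0)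
    (hii : ∀ (v : Fin n → ℝ) (u : Fin p → ℝ),
        ((C + D * K).mulVec v) ⬝ᵥ ((C + D * K).mulVec v)
          ≤ μ₁ * (v ⬝ᵥ P.mulVec v) + μ₂ * (u ⬝ᵥ u)) :
    ∀ t : ℝ, 0 ≤ t →
      Real.sqrt (((C + D * K).mulVec (x t)) ⬝ᵥ ((C + D * K).mulVec (x t)))
        ≤ Real.sqrt (μ₀ * μ₁ + μ₂)
          * (⨆ s : {s : ℝ // 0 ≤ s}, Real.sqrt (w s ⬝ᵥ w s)) := by
  intro t ht
  set W := ⨆ s : {s : ℝ // 0 ≤ s}, √(w s ⬝ᵥ w s)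
  have hW : 0 ≤ W := Real.iSup_nonneg fun _ => Real.sqrt_nonneg _
  have hw : ∀ s, 0 ≤ s → w s ⬝ᵥ w s ≤ W ^ 2 := fun s hs =>
    dotProduct_self_le_sq_iSup_sqrt hwbdd ⟨s, hs⟩
  have hV' : ∀ s, HasDerivAt (fun s => x s ⬝ᵥ P *ᵥ x s) _ s := fun s =>
    (hdyn s).dotProduct ((hdyn s).mulVec P)
  have hV : x t ⬝ᵥ P *ᵥ x t ≤ μ₀ * W ^ 2 :=
    image_le_of_deriv_right_neg_of_lt (a := 0) (fun s _ => (hV' s).continuousAt.continuousWithinAt)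
      (fun s _ => (hV' s).hasDerivWithinAt) (by simp [hx0]; positivity)
      (fun s hs hgt => hi _ _ (lt_of_le_of_lt (by gcongr; exact hw s hs.1) hgt)) ⟨ht, le_rfl⟩
  have hz : (C + D * K) *ᵥ x t ⬝ᵥ (C + D * K) *ᵥ x t ≤ (μ₀ * μ₁ + μ₂) * W ^ 2 :=
    calc _ ≤ μ₁ * (x t ⬝ᵥ P *ᵥ x t) + μ₂ * (w t ⬝ᵥ w t) := hii _ _
      _ ≤ μ₁ * (μ₀ * W ^ 2) + μ₂ * W ^ 2 := by gcongr; exact hw t ht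
      _ = (μ₀ * μ₁ + μ₂) * W ^ 2 := by ring
  calc _ ≤ √((μ₀ * μ₁ + μ₂) * W ^ 2) := Real.sqrt_le_sqrt hz
    _ = √(μ₀ * μ₁ + μ₂) * W := by rw [Real.sqrt_mul' _ (sq_nonneg W), Real.sqrt_sq hW]

/-- L∞-stability with performance level `μ = √(μ₀μ₁ + μ₂)`: if `V(x) = xᵀPx`
satisfies (i) `V̇ < 0` whenever `xᵀPx > μ₀‖w‖₂²`, and (ii)
`‖z‖₂² ≤ μ₁ xᵀPx + μ₂‖w‖₂²` pointwise, then for zero initial condition and bounded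
disturbance `w ∈ L∞`, the output of `ẋ = (A + B_uK)x + B_w w`, `z = (C + DK)x`
satisfies `‖z(t)‖₂ ≤ μ ‖w‖_{L∞}` for all `t ≥ 0`. -/
theorem linf_stability_performance (n m p q : ℕ)
    (A : Matrix (Fin n) (Fin n) ℝ) (Bu : Matrix (Fin n) (Fin m) ℝ)
    (K : Matrix (Fin m) (Fin n) ℝ) (Bw : Matrix (Fin n) (Fin p) ℝ)
    (C : Matrix (Fin q) (Fin n) ℝ) (D : Matrix (Fin q) (Fin m) ℝ)
    (P : Matrix (Fin n) (Fin n) ℝ) (hP : P.PosDef)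
    (μ₀ μ₁ μ₂ : ℝ) (hμ₀ : 0 < μ₀) (hμ₁ : 0 < μ₁) (hμ₂ : 0 < μ₂)
    (x : ℝ → (Fin n → ℝ)) (w : ℝ → (Fin p → ℝ))
    (hx0 : x 0 = 0)
    (hdyn : ∀ t : ℝ, HasDerivAt x ((A + Bu * K).mulVec (x t) + Bw.mulVec (w t)) t)
    (hwbdd : BddAbove (Set.range fun t : {s : ℝ // 0 ≤ s} =>
        Real.sqrt (w t ⬝ᵥ w t)))
    (hi : ∀ (v : Fin n → ℝ) (u : Fin p → ℝ),
        v ⬝ᵥ P.mulVec v > μ₀ * (u ⬝ᵥ u) →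
        ((A + Bu * K).mulVec v + Bw.mulVec u) ⬝ᵥ P.mulVec v
          + v ⬝ᵥ P.mulVec ((A + Bu * K).mulVec v + Bw.mulVec u) < 0)
    (hii : ∀ (v : Fin n → ℝ) (u : Fin p → ℝ),
        ((C + D * K).mulVec v) ⬝ᵥ ((C + D * K).mulVec v)
          ≤ μ₁ * (v ⬝ᵥ P.mulVec v) + μ₂ * (u ⬝ᵥ u)) :
    ∀ t : ℝ, 0 ≤ t →
      Real.sqrt (((C + D * K).mulVec (x t)) ⬝ᵥ ((C + D * K).mulVec (x t)))
        ≤ Real.sqrt (μ₀ * μ₁ + μ₂)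
          * (⨆ s : {s : ℝ // 0 ≤ s}, Real.sqrt (w s ⬝ᵥ w s)) :=
  linf_stability_performance_general n m p q A Bu K Bw C D P μ₀ μ₁ μ₂ hμ₀ hμ₁ hμ₂ x w hx0 hdyn hwbdd
    hi hii
end

section
/- Let S ∈ 𝕊ⁿ₊₊ and let F_{l₁}(α, S; α̃, S̃) = α̃²I − 2α̃S̃ + S̃² − 2α(α̃I − S̃) + (2α̃I − S̃)S − SS̃ for a symmetric positive definite linearization point S̃ and scalars α, α̃. Then −(αI − S)ᵀ(αI − S) ⪯ F_{l₁}(α, S; α̃, S̃) for all α ∈ ℝ and symmetric S, i.e., F_{l₁} is a global Loewner-order overestimator of the concave matrix function (α, S) ↦ −(αI − S)². -/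
open Matrix

/-- `F_{l₁}(α, S; α̃, S̃) = α̃²I - 2α̃S̃ + S̃² - 2α(α̃I - S̃) + (2α̃I - S̃)S - SS̃` is a
global Loewner overestimator of the concave matrix function
`(α, S) ↦ -(αI - S)ᵀ(αI - S)`. -/
theorem Fl1_overestimator (n : ℕ) (α αt : ℝ)
    (S St : Matrix (Fin n) (Fin n) ℝ) (hS : S.IsSymm) (hSt : St.PosDef) :
    (((αt ^ 2) • (1 : Matrix (Fin n) (Fin n) ℝ) - (2 * αt) • St + St * St
        - (2 * α) • (αt • (1 : Matrix (Fin n) (Fin n) ℝ) - St)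
        + ((2 * αt) • (1 : Matrix (Fin n) (Fin n) ℝ) - St) * S - S * St)
      - (-((α • (1 : Matrix (Fin n) (Fin n) ℝ) - S)ᵀ
          * (α • (1 : Matrix (Fin n) (Fin n) ℝ) - S)))).PosSemidef := by
  have hS' : Sᵀ = S := hS
  have hSt' : Stᵀ = St := hSt.1
  set M : Matrix (Fin n) (Fin n) ℝ :=
    (α - αt) • (1 : Matrix (Fin n) (Fin n) ℝ) - (S - St) with hMdef
  have h := Matrix.posSemidef_conjTranspose_mul_self M
  have hMH : Mᴴ = M := by
    simp [hMdef, conjTranspose_sub, conjTranspose_smul, hS', hSt',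
      Matrix.conjTranspose_eq_transpose_of_trivial]
  rw [hMH] at h
  convert h using 1
  rw [hMdef]
  simp only [transpose_sub, transpose_smul, transpose_one, hS']
  simp only [mul_sub, sub_mul, add_mul, mul_add, smul_mul_assoc, mul_smul_comm,
    smul_smul, Matrix.mul_one, Matrix.one_mul, smul_sub, sub_smul, smul_add]
  module
end

section
/- Let P ∈ 𝕊ⁿ₊₊, C ∈ ℝ^{q×n}, D ∈ ℝ^{q×m}, K ∈ ℝ^{m×n}, μ₁, μ₂ > 0, and let H_l(μ₁, P; μ̃₁, P̃) = μ̃₁²I + 2μ̃₁P̃ + P̃² − 2μ₁(μ̃₁I + P̃) − (2μ̃₁I + P̃)P − PP̃. If the block matrix [[(1/4)H_l(μ₁,P;μ̃₁,P̃), 0, (C+DK)ᵀ, (1/2)(μ₁I−P)], [0, −μ₂I, 0, 0], [C+DK, 0, −I, 0], [(1/2)(μ₁I−P), 0, 0, −I]] is negative semidefinite, then [[−μ₁P, 0, (C+DK)ᵀ], [0, −μ₂I, 0], [C+DK, 0, −I]] is negative semidefinite. -/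
/-!
Write `E = C + DK`, `S = μ₁I - P`, `B = μ₁I + P` and `B̃ = μ̃₁I + P̃`. The Schur complement
of the identity block of the linearized matrix is `diag(-H_l/4 - EᵀE - S²/4, μ₂I) ⪰ 0`, and the
target is positive semidefinite iff its Schur complement `diag(μ₁P - EᵀE, μ₂I)` is. Since
`μ₁P = (B² - S²)/4` and `H_l = B̃² - B̃B - BB̃`, the two upper-left blocks differ by
`(H_l + B²)/4 = (B̃ - B)²/4 ⪰ 0`.
-/

open Matrix

namespace Matrix

variable {m n p q R : Type*} [Fintype m] [Fintype n] [Fintype p] [Fintype q]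
  [CommRing R] [PartialOrder R] [StarRing R]

theorem posSemidef_fromBlocks_one_iff [DecidableEq n] [StarOrderedRing R] [NoZeroDivisors R]
    (A : Matrix m m R) (B : Matrix m n R) :
    (fromBlocks A B Bᴴ 1).PosSemidef ↔ (A - B * Bᴴ).PosSemidef := by
  let := invertibleOne (α := Matrix n n R)
  simpa using PosDef.fromBlocks₂₂ A B PosDef.one

theorem PosSemidef.fromBlocks_zero [DecidableEq m] {A : Matrix m m R} (hA : A.PosSemidef) :
    (fromBlocks A 0 0 (0 : Matrix n n R)).PosSemidef := by
  simpa [conjTranspose_fromCols_eq_fromRows_conjTranspose, ← fromRows_zero,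
    fromCols_fromRows_eq_fromBlocks] using
    hA.conjTranspose_mul_mul_same (fromCols (1 : Matrix m m R) (0 : Matrix m n R))

theorem PosSemidef.fromBlocks₁₁_mono [StarOrderedRing R] [DecidableEq m] {A A' : Matrix m m R}
    {B : Matrix m n R} {C : Matrix n m R} {D : Matrix n n R} (h : (fromBlocks A B C D).PosSemidef)
    (hA : (A' - A).PosSemidef) : (fromBlocks A' B C D).PosSemidef := by
  simpa [fromBlocks_add] using h.add hA.fromBlocks_zero

theorem IsHermitian.posSemidef_mul_self [StarOrderedRing R] {A : Matrix n n R}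
    (hA : A.IsHermitian) : (A * A).PosSemidef := by
  simpa [hA.eq] using posSemidef_conjTranspose_mul_self A

theorem posSemidef_fromBlocks_fromBlocks_one_iff [DecidableEq q] [DecidableEq m]
    [StarOrderedRing R] [NoZeroDivisors R]
    (A : Matrix n n R) (Y : Matrix p p R) (F : Matrix q n R) (G : Matrix n m R) :
    (fromBlocks (fromBlocks A 0 0 Y) (fromBlocks Fᴴ G 0 0) (fromBlocks F 0 Gᴴ 0)
        1).PosSemidef ↔
      (fromBlocks (A - Fᴴ * F - G * Gᴴ) 0 0 Y).PosSemidef := by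
  have hB : (fromBlocks Fᴴ G 0 0 : Matrix (n ⊕ p) (q ⊕ m) R)ᴴ = fromBlocks F 0 Gᴴ 0 := by
    simp [fromBlocks_conjTranspose]
  rw [← hB, posSemidef_fromBlocks_one_iff, hB, fromBlocks_multiply, sub_sub]
  simp [sub_eq_add_neg, fromBlocks_neg, fromBlocks_add]

theorem posSemidef_fromBlocks_fromCols_iff [DecidableEq q] [StarOrderedRing R] [NoZeroDivisors R]
    (Z : Matrix n n R) (Y : Matrix p p R) (F : Matrix q n R) :
    (fromBlocks Z (fromCols 0 Fᴴ) (fromRows 0 F) (fromBlocks Y 0 0 1)).PosSemidef ↔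
      (fromBlocks (Z - Fᴴ * F) 0 0 Y).PosSemidef := by
  have hB : (fromRows Fᴴ 0 : Matrix (n ⊕ p) q R)ᴴ = fromCols F 0 := by
    simp [conjTranspose_fromRows_eq_fromCols_conjTranspose]
  rw [← posSemidef_submatrix_equiv (Equiv.sumAssoc n p q)]
  convert posSemidef_fromBlocks_one_iff (fromBlocks Z 0 0 Y) (fromRows Fᴴ 0) using 2
  · ext ((i | i) | i) ((j | j) | j) <;> simp [hB]
  · rw [hB, fromRows_mul_fromCols]
    simp [sub_eq_add_neg, fromBlocks_neg, fromBlocks_add]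

end Matrix

theorem sca_performance_implication_general (n m p q : ℕ)
    (P Pt : Matrix (Fin n) (Fin n) ℝ) (hP : P.PosDef) (hPt : Pt.PosDef)
    (C : Matrix (Fin q) (Fin n) ℝ) (D : Matrix (Fin q) (Fin m) ℝ)
    (K : Matrix (Fin m) (Fin n) ℝ)
    (μ₁ μ₂ μ₁t : ℝ)
    (hLMI : (-(Matrix.fromBlocks
        (Matrix.fromBlocks
          ((1/4 : ℝ) • ((μ₁t ^ 2) • (1 : Matrix (Fin n) (Fin n) ℝ) + (2 * μ₁t) • Pt
            + Pt * Pt - (2 * μ₁) • (μ₁t • (1 : Matrix (Fin n) (Fin n) ℝ) + Pt)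
            - ((2 * μ₁t) • (1 : Matrix (Fin n) (Fin n) ℝ) + Pt) * P - P * Pt))
          (0 : Matrix (Fin n) (Fin p) ℝ)
          (0 : Matrix (Fin p) (Fin n) ℝ)
          (-μ₂ • (1 : Matrix (Fin p) (Fin p) ℝ)))
        (Matrix.fromBlocks
          ((C + D * K)ᵀ)
          ((1/2 : ℝ) • (μ₁ • (1 : Matrix (Fin n) (Fin n) ℝ) - P))
          (0 : Matrix (Fin p) (Fin q) ℝ)
          (0 : Matrix (Fin p) (Fin n) ℝ))
        (Matrix.fromBlocks
          (C + D * K)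
          (0 : Matrix (Fin q) (Fin p) ℝ)
          ((1/2 : ℝ) • (μ₁ • (1 : Matrix (Fin n) (Fin n) ℝ) - P))
          (0 : Matrix (Fin n) (Fin p) ℝ))
        (Matrix.fromBlocks
          (-(1 : Matrix (Fin q) (Fin q) ℝ))
          (0 : Matrix (Fin q) (Fin n) ℝ)
          (0 : Matrix (Fin n) (Fin q) ℝ)
          (-(1 : Matrix (Fin n) (Fin n) ℝ))))).PosSemidef) :
    (-(Matrix.fromBlocks
        (-μ₁ • P)
        (Matrix.fromCols (0 : Matrix (Fin n) (Fin p) ℝ) ((C + D * K)ᵀ))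
        (Matrix.fromRows (0 : Matrix (Fin p) (Fin n) ℝ) (C + D * K))
        (Matrix.fromBlocks
          (-μ₂ • (1 : Matrix (Fin p) (Fin p) ℝ)) (0 : Matrix (Fin p) (Fin q) ℝ)
          (0 : Matrix (Fin q) (Fin p) ℝ) (-(1 : Matrix (Fin q) (Fin q) ℝ))))).PosSemidef := by
  have hE : (C + D * K)ᵀ = (C + D * K)ᴴ := (conjTranspose_eq_transpose_of_trivial _).symm
  set E := C + D * K
  set S := μ₁ • (1 : Matrix (Fin n) (Fin n) ℝ) - P
  have hHalfS : (-((1 / 2 : ℝ) • S))ᴴ = -((1 / 2 : ℝ) • S) :=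
    ((isHermitian_one.smul (.all μ₁)).sub hP.isHermitian).smul (.all _) |>.neg
  have hGap : (μ₁t • 1 + Pt - (μ₁ • 1 + P)).IsHermitian :=
    ((isHermitian_one.smul (.all μ₁t)).add hPt.isHermitian).sub
      ((isHermitian_one.smul (.all μ₁)).add hP.isHermitian)
  simp only [fromBlocks_neg, fromCols_neg, fromRows_neg, neg_neg, neg_zero, neg_smul,
    fromBlocks_one, hE, ← conjTranspose_neg] at hLMI ⊢
  have hSchur := (posSemidef_fromBlocks_fromBlocks_one_iff _ _ (-E) (-((1 / 2 : ℝ) • S))).1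
    (by rwa [hHalfS])
  rw [posSemidef_fromBlocks_fromCols_iff]
  refine hSchur.fromBlocks₁₁_mono ?_
  convert hGap.posSemidef_mul_self.smul (by norm_num : (0 : ℝ) ≤ 1 / 4) using 1
  rw [hHalfS]
  simp only [S, add_mul, mul_add, sub_mul, mul_sub, smul_mul_smul, Matrix.smul_mul,
    Matrix.mul_smul, one_mul, mul_one, neg_mul, mul_neg, smul_add, smul_sub, pow_two]
  module

/-- SCA implication for the decentralized performance LMI: if the linearized 4×4 block
matrix (built from `H_l(μ₁, P; μ̃₁, P̃)`) is negative semidefinite, then the original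
3×3 block matrix `[[-μ₁P, 0, (C+DK)ᵀ], [0, -μ₂I, 0], [C+DK, 0, -I]]` is negative
semidefinite. -/
theorem sca_performance_implication (n m p q : ℕ)
    (P Pt : Matrix (Fin n) (Fin n) ℝ) (hP : P.PosDef) (hPt : Pt.PosDef)
    (C : Matrix (Fin q) (Fin n) ℝ) (D : Matrix (Fin q) (Fin m) ℝ)
    (K : Matrix (Fin m) (Fin n) ℝ)
    (μ₁ μ₂ μ₁t : ℝ) (hμ₁ : 0 < μ₁) (hμ₂ : 0 < μ₂) (hμ₁t : 0 < μ₁t)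
    (hLMI : (-(Matrix.fromBlocks
        (Matrix.fromBlocks
          ((1/4 : ℝ) • ((μ₁t ^ 2) • (1 : Matrix (Fin n) (Fin n) ℝ) + (2 * μ₁t) • Pt
            + Pt * Pt - (2 * μ₁) • (μ₁t • (1 : Matrix (Fin n) (Fin n) ℝ) + Pt)
            - ((2 * μ₁t) • (1 : Matrix (Fin n) (Fin n) ℝ) + Pt) * P - P * Pt))
          (0 : Matrix (Fin n) (Fin p) ℝ)
          (0 : Matrix (Fin p) (Fin n) ℝ)
          (-μ₂ • (1 : Matrix (Fin p) (Fin p) ℝ)))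
        (Matrix.fromBlocks
          ((C + D * K)ᵀ)
          ((1/2 : ℝ) • (μ₁ • (1 : Matrix (Fin n) (Fin n) ℝ) - P))
          (0 : Matrix (Fin p) (Fin q) ℝ)
          (0 : Matrix (Fin p) (Fin n) ℝ))
        (Matrix.fromBlocks
          (C + D * K)
          (0 : Matrix (Fin q) (Fin p) ℝ)
          ((1/2 : ℝ) • (μ₁ • (1 : Matrix (Fin n) (Fin n) ℝ) - P))
          (0 : Matrix (Fin n) (Fin p) ℝ))
        (Matrix.fromBlocks
          (-(1 : Matrix (Fin q) (Fin q) ℝ))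
          (0 : Matrix (Fin q) (Fin n) ℝ)
          (0 : Matrix (Fin n) (Fin q) ℝ)
          (-(1 : Matrix (Fin n) (Fin n) ℝ))))).PosSemidef) :
    (-(Matrix.fromBlocks
        (-μ₁ • P)
        (Matrix.fromCols (0 : Matrix (Fin n) (Fin p) ℝ) ((C + D * K)ᵀ))
        (Matrix.fromRows (0 : Matrix (Fin p) (Fin n) ℝ) (C + D * K))
        (Matrix.fromBlocks
          (-μ₂ • (1 : Matrix (Fin p) (Fin p) ℝ)) (0 : Matrix (Fin p) (Fin q) ℝ)
          (0 : Matrix (Fin q) (Fin p) ℝ) (-(1 : Matrix (Fin q) (Fin q) ℝ))))).PosSemidef :=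
  sca_performance_implication_general n m p q P Pt hP hPt C D K μ₁ μ₂ μ₁t hLMI
end
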